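/- Let Γ be a bounded measurable subset of ℝ², k ∈ L^∞(Γ × Γ) nonnegative and symmetric, and K the associated integral operator. If (w_n) converges to w weakly in L¹(Γ), then for every 1 ≤ p < ∞, (K w_n) converges to K w strongly in L^p(Γ). -/

import Mathlib

open MeasureTheory Filter
open scoped ENNReal Topology

/-! Testing weak `L¹` convergence against the bounded functions `k(x, ·)` gives `K wₙ → K w`
pointwise. The functionals `φ ↦ ∫ wₙ φ` on `L^∞` are pointwise bounded, hence uniformly bounded by
Banach–Steinhaus, so `|K wₙ| ≤ C · sup |k|` uniformly in `n`. As `Γ` has finite measure, dominated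
convergence upgrades pointwise convergence to convergence in every `L^p`. -/

namespace MeasureTheory

variable {α : Type*} [MeasurableSpace α] {μ : Measure α}

lemma Lp.ae_norm_le_norm_top {E : Type*} [NormedAddCommGroup E] (φ : Lp E ∞ μ) :
    ∀ᵐ x ∂μ, ‖φ x‖ ≤ ‖φ‖ := by
  rw [Lp.norm_def, toReal_eLpNorm (Lp.aestronglyMeasurable φ)]
  exact ae_le_lpNorm_exponent_top (Lp.memLp φ)

lemma Lp.norm_toLp_top_le {E : Type*} [NormedAddCommGroup E] {f : α → E} (hf : MemLp f ∞ μ)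
    {B : ℝ} (hB : 0 ≤ B) (hfB : ∀ᵐ x ∂μ, ‖f x‖ ≤ B) : ‖hf.toLp f‖ ≤ B := by
  rw [Lp.norm_toLp]
  refine ENNReal.toReal_le_of_le_ofReal hB ?_
  simpa using eLpNorm_le_of_ae_bound (p := ∞) hfB

lemma Lp.exists_measurable_ae_eq_abs_le_norm (φ : Lp ℝ ∞ μ) :
    ∃ g : α → ℝ, Measurable g ∧ (∀ x, |g x| ≤ ‖φ‖) ∧ φ =ᵐ[μ] g := by
  obtain ⟨g, hg, hφg⟩ := Lp.aestronglyMeasurable φ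
  refine ⟨fun x => max (-‖φ‖) (min ‖φ‖ (g x)),
    measurable_const.max (measurable_const.min hg.measurable), fun x => ?_, ?_⟩
  · exact abs_le.2 ⟨le_max_left _ _, max_le (by linarith [norm_nonneg φ]) (min_le_left _ _)⟩
  · filter_upwards [hφg, Lp.ae_norm_le_norm_top φ] with x hx hxφ
    rw [hx, Real.norm_eq_abs, abs_le] at *
    rw [min_eq_right hxφ.2, max_eq_right hxφ.1]

lemma lpPairing_mul_toL1_apply {f : α → ℝ} (hf : Integrable f μ) (φ : Lp ℝ ∞ μ) :
    (ContinuousLinearMap.mul ℝ ℝ).lpPairing μ 1 ∞ (hf.toL1 f) φ = ∫ x, f x * φ x ∂μ := by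
  rw [ContinuousLinearMap.lpPairing_eq_integral]
  refine integral_congr_ae ?_
  filter_upwards [hf.coeFn_toL1] with x hx
  rw [ContinuousLinearMap.mul_apply', hx]

lemma exists_norm_lpPairing_mul_le_of_bounded {ι : Type*} {w : ι → α → ℝ}
    (hw : ∀ i, Integrable (w i) μ)
    (hbdd : ∀ φ : α → ℝ, Measurable φ → (∃ B, ∀ x, |φ x| ≤ B) →
      ∃ C, ∀ i, |∫ x, w i x * φ x ∂μ| ≤ C) :
    ∃ C, ∀ i, ‖(ContinuousLinearMap.mul ℝ ℝ).lpPairing μ 1 ∞ ((hw i).toL1 (w i))‖ ≤ C := by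
  refine banach_steinhaus fun φ => ?_
  obtain ⟨g, hg, hgφ, hφg⟩ := Lp.exists_measurable_ae_eq_abs_le_norm φ
  obtain ⟨C, hC⟩ := hbdd g hg ⟨_, hgφ⟩
  refine ⟨C, fun i => ?_⟩
  rw [lpPairing_mul_toL1_apply, Real.norm_eq_abs,
    integral_congr_ae (hφg.mono fun x hx => by rw [hx])]
  exact hC i

lemma tendsto_integral_abs_sub_rpow_of_ae_bound [IsFiniteMeasure μ] {F : ℕ → α → ℝ}
    {f : α → ℝ} {D p : ℝ} (hp : 0 < p) (hF : ∀ n, AEStronglyMeasurable (F n) μ)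
    (hFD : ∀ n, ∀ᵐ x ∂μ, |F n x| ≤ D) (hFf : ∀ᵐ x ∂μ, Tendsto (F · x) atTop (𝓝 (f x))) :
    Tendsto (fun n => ∫ x, |F n x - f x| ^ p ∂μ) atTop (𝓝 0) := by
  have hf : AEStronglyMeasurable f μ := aestronglyMeasurable_of_tendsto_ae _ hF hFf
  have hfD : ∀ᵐ x ∂μ, |f x| ≤ D := by
    filter_upwards [ae_all_iff.2 hFD, hFf] with x hxD hx
    exact le_of_tendsto' hx.abs hxD
  have hcont : Continuous fun t : ℝ => |t| ^ p :=
    continuous_abs.rpow_const fun _ => Or.inr hp.le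
  have hdom : ∀ n, ∀ᵐ x ∂μ, ‖|F n x - f x| ^ p‖ ≤ (2 * D) ^ p := fun n => by
    filter_upwards [hFD n, hfD] with x hFx hfx
    rw [Real.norm_eq_abs, abs_of_nonneg (by positivity)]
    gcongr
    linarith [abs_sub (F n x) (f x)]
  have hlim : ∀ᵐ x ∂μ, Tendsto (fun n => |F n x - f x| ^ p) atTop (𝓝 0) := by
    filter_upwards [hFf] with x hx
    have h := (hcont.tendsto 0).comp (tendsto_sub_nhds_zero_iff.2 hx)
    rwa [abs_zero, Real.zero_rpow hp.ne'] at h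
  simpa using tendsto_integral_of_dominated_convergence _
    (fun n => hcont.comp_aestronglyMeasurable ((hF n).sub hf)) (integrable_const _) hdom hlim

variable {β : Type*} [MeasurableSpace β] {k : β → α → ℝ}

lemma aestronglyMeasurable_integral_kernel_mul {ν : Measure β} [SFinite μ]
    (hk : Measurable (Function.uncurry k)) {v : α → ℝ} (hv : AEStronglyMeasurable v μ) :
    AEStronglyMeasurable (fun x => ∫ y, k x y * v y ∂μ) ν :=
  (hk.aestronglyMeasurable.mul hv.comp_snd).integral_prod_right'

lemma abs_integral_kernel_mul_le {M : ℝ} (hM : 0 ≤ M) (hk : Measurable (Function.uncurry k))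
    (hkM : ∀ x y, |k x y| ≤ M) {w : α → ℝ} (hw : Integrable w μ) (x : β) :
    |∫ y, k x y * w y ∂μ| ≤ ‖(ContinuousLinearMap.mul ℝ ℝ).lpPairing μ 1 ∞ (hw.toL1 w)‖ * M := by
  have hkx : MemLp (k x) ∞ μ :=
    memLp_top_of_bound hk.of_uncurry_left.aestronglyMeasurable M (.of_forall (hkM x))
  calc |∫ y, k x y * w y ∂μ|
      = ‖(ContinuousLinearMap.mul ℝ ℝ).lpPairing μ 1 ∞ (hw.toL1 w) (hkx.toLp (k x))‖ := by
        rw [lpPairing_mul_toL1_apply, Real.norm_eq_abs]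
        congr 1
        refine integral_congr_ae ?_
        filter_upwards [hkx.coeFn_toLp] with y hy
        rw [hy, mul_comm]
    _ ≤ ‖(ContinuousLinearMap.mul ℝ ℝ).lpPairing μ 1 ∞ (hw.toL1 w)‖ * ‖hkx.toLp (k x)‖ :=
        ContinuousLinearMap.le_opNorm _ _
    _ ≤ _ := by
        gcongr
        exact Lp.norm_toLp_top_le hkx hM (.of_forall (hkM x))

end MeasureTheory

theorem stmt2_general
    (Γ : Set (EuclideanSpace ℝ (Fin 2)))
    (hΓb : Bornology.IsBounded Γ)
    (k : EuclideanSpace ℝ (Fin 2) → EuclideanSpace ℝ (Fin 2) → ℝ)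
    (hk_meas : Measurable (Function.uncurry k))
    (hk_nonneg : ∀ x y, 0 ≤ k x y)
    (M : ℝ) (hk_bdd : ∀ x y, k x y ≤ M)
    (K : (EuclideanSpace ℝ (Fin 2) → ℝ) → EuclideanSpace ℝ (Fin 2) → ℝ)
    (hK : ∀ w x, K w x = ∫ y in Γ, k x y * w y)
    (w : ℕ → EuclideanSpace ℝ (Fin 2) → ℝ) (w₀ : EuclideanSpace ℝ (Fin 2) → ℝ)
    (hw : ∀ n, IntegrableOn (w n) Γ)
    -- weak convergence in `L¹(Γ)`: testing against every bounded measurable `φ`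
    (hweak : ∀ φ : EuclideanSpace ℝ (Fin 2) → ℝ, Measurable φ →
      (∃ Cφ : ℝ, ∀ x, |φ x| ≤ Cφ) →
      Tendsto (fun n => ∫ x in Γ, w n x * φ x) atTop (nhds (∫ x in Γ, w₀ x * φ x))) :
    ∀ p : ℝ, 1 ≤ p →
      Tendsto (fun n => ∫ x in Γ, |K (w n) x - K w₀ x| ^ p) atTop (nhds 0) := by
  intro p hp
  obtain rfl : K = fun v x => ∫ y in Γ, k x y * v y := funext fun v => funext (hK v)
  have : IsFiniteMeasure (volume.restrict Γ) := ⟨by simpa using hΓb.measure_lt_top⟩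
  have hkM : ∀ x y, |k x y| ≤ M := fun x y => (abs_of_nonneg (hk_nonneg x y)).trans_le (hk_bdd x y)
  have hM : 0 ≤ M := (abs_nonneg _).trans (hkM 0 0)
  obtain ⟨C, hC⟩ := exists_norm_lpPairing_mul_le_of_bounded hw fun φ hφ hφB => by
    obtain ⟨C, hC⟩ := (hweak φ hφ hφB).abs.bddAbove_range
    exact ⟨C, fun n => hC ⟨n, rfl⟩⟩
  refine tendsto_integral_abs_sub_rpow_of_ae_bound (D := C * M) (by linarith)
    (fun n => aestronglyMeasurable_integral_kernel_mul hk_meas (hw n).aestronglyMeasurable)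
    (fun n => .of_forall fun x => (abs_integral_kernel_mul_le hM hk_meas hkM (hw n) x).trans
      (mul_le_mul_of_nonneg_right (hC n) hM))
    (.of_forall fun x => ?_)
  simpa only [mul_comm (k x _)] using hweak (k x) hk_meas.of_uncurry_left ⟨M, hkM x⟩

/-- If `wₙ ⇀ w` weakly in `L¹(Γ)`, then `K wₙ → K w` strongly in `L^p(Γ)` for every
`1 ≤ p < ∞`. -/
theorem stmt2
    (Γ : Set (EuclideanSpace ℝ (Fin 2)))
    (hΓm : MeasurableSet Γ) (hΓb : Bornology.IsBounded Γ)
    (k : EuclideanSpace ℝ (Fin 2) → EuclideanSpace ℝ (Fin 2) → ℝ)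
    (hk_meas : Measurable (Function.uncurry k))
    (hk_nonneg : ∀ x y, 0 ≤ k x y)
    (hk_symm : ∀ x y, k x y = k y x)
    (M : ℝ) (hk_bdd : ∀ x y, k x y ≤ M)
    (K : (EuclideanSpace ℝ (Fin 2) → ℝ) → EuclideanSpace ℝ (Fin 2) → ℝ)
    (hK : ∀ w x, K w x = ∫ y in Γ, k x y * w y)
    (w : ℕ → EuclideanSpace ℝ (Fin 2) → ℝ) (w₀ : EuclideanSpace ℝ (Fin 2) → ℝ)
    (hw : ∀ n, IntegrableOn (w n) Γ) (hw₀ : IntegrableOn w₀ Γ)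
    -- weak convergence in `L¹(Γ)`: testing against every bounded measurable `φ`
    (hweak : ∀ φ : EuclideanSpace ℝ (Fin 2) → ℝ, Measurable φ →
      (∃ Cφ : ℝ, ∀ x, |φ x| ≤ Cφ) →
      Tendsto (fun n => ∫ x in Γ, w n x * φ x) atTop (nhds (∫ x in Γ, w₀ x * φ x))) :
    ∀ p : ℝ, 1 ≤ p →
      Tendsto (fun n => ∫ x in Γ, |K (w n) x - K w₀ x| ^ p) atTop (nhds 0) :=
  stmt2_general Γ hΓb k hk_meas hk_nonneg M hk_bdd K hK w w₀ hw hweak
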